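/- arXiv:1704.00327 — 5 statements merged into one kernel-verified Lean document; each statement's English description precedes it below -/
import Mathlib

section
/- For all q, q_d ∈ S² with ⟨q_d, q⟩ > −1 (equivalently Ψ(q, q_d) < 2), the inequalities ‖e_q(q, q_d)‖₂² ≤ Ψ(q, q_d) ≤ 2‖e_q(q, q_d)‖₂² hold. -/
open scoped RealInnerProductSpace

/-- Cross product on ℝ³ (as `EuclideanSpace ℝ (Fin 3)`). -/
noncomputable def cross (a b : EuclideanSpace ℝ (Fin 3)) : EuclideanSpace ℝ (Fin 3) :=
  WithLp.toLp 2 ![a 1 * b 2 - a 2 * b 1, a 2 * b 0 - a 0 * b 2, a 0 * b 1 - a 1 * b 0]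

/-- Reduced-attitude error function Ψ(q, q_d) = 2 − √2·√(1 + ⟨q_d, q⟩). -/
noncomputable def Psi (q qd : EuclideanSpace ℝ (Fin 3)) : ℝ :=
  2 - Real.sqrt 2 * Real.sqrt (1 + ⟪qd, q⟫)

/-- Reduced-attitude error vector e_q(q, q_d). -/
noncomputable def eVec (q qd : EuclideanSpace ℝ (Fin 3)) : EuclideanSpace ℝ (Fin 3) :=
  (1 / (Real.sqrt 2 * Real.sqrt (1 + ⟪qd, q⟫))) • cross q (cross q qd)

/-! With `c = ⟪q_d, q⟫`, the BAC–CAB rule gives `q × (q × q_d) = c • q - q_d`, so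
`‖e_q‖² = (1 - c²) / (2 (1 + c)) = (1 - c) / 2`. Putting `s = √(2 (1 + c)) ∈ [0, 2]`, we get
`Ψ = 2 - s` and `‖e_q‖² = (2 - s) (2 + s) / 4`, and `(2 + s) / 4 ∈ [1/2, 1]`. -/

theorem cross_eq_toLp_crossProduct (a b : EuclideanSpace ℝ (Fin 3)) :
    cross a b = WithLp.toLp 2 (crossProduct a.ofLp b.ofLp) := rfl

theorem cross_cross_eq_inner_smul_sub_inner_smul (a b c : EuclideanSpace ℝ (Fin 3)) :
    cross a (cross b c) = ⟪a, c⟫ • b - ⟪a, b⟫ • c := by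
  simp only [cross_eq_toLp_crossProduct, cross_cross_eq_smul_sub_smul',
    EuclideanSpace.inner_eq_star_dotProduct, star_trivial, dotProduct_comm b.ofLp,
    dotProduct_comm c.ofLp, WithLp.toLp_sub, WithLp.toLp_smul, WithLp.toLp_ofLp]

theorem norm_cross_cross_sq_of_norm_eq_one {q : EuclideanSpace ℝ (Fin 3)} (hq : ‖q‖ = 1)
    (v : EuclideanSpace ℝ (Fin 3)) :
    ‖cross q (cross q v)‖ ^ 2 = ‖v‖ ^ 2 - ⟪q, v⟫ ^ 2 := by
  rw [cross_cross_eq_inner_smul_sub_inner_smul, real_inner_self_eq_norm_sq, hq, one_pow, one_smul,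
    norm_sub_sq_real, real_inner_smul_left, norm_smul, Real.norm_eq_abs, mul_pow, sq_abs, hq]
  ring

theorem norm_eVec_sq {q qd : EuclideanSpace ℝ (Fin 3)} (hq : ‖q‖ = 1) (hqd : ‖qd‖ = 1)
    (h : -1 < ⟪qd, q⟫) : ‖eVec q qd‖ ^ 2 = (1 - ⟪qd, q⟫) / 2 := by
  have hpos : 0 < 1 + ⟪qd, q⟫ := by linarith
  rw [eVec, norm_smul, mul_pow, norm_cross_cross_sq_of_norm_eq_one hq, hqd, real_inner_comm qd q,
    Real.norm_eq_abs, sq_abs, div_pow, mul_pow, Real.sq_sqrt zero_le_two, Real.sq_sqrt hpos.le]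
  field_simp
  ring

theorem two_sub_sqrt_two_mul_sqrt_one_add_mem_Icc {c : ℝ} (hc₀ : -1 ≤ c) (hc₁ : c ≤ 1) :
    2 - √2 * √(1 + c) ∈ Set.Icc ((1 - c) / 2) (1 - c) := by
  set s := √2 * √(1 + c)
  have hs : s ^ 2 = 2 * (1 + c) := by
    rw [mul_pow, Real.sq_sqrt zero_le_two, Real.sq_sqrt (by linarith)]
  have hs0 : 0 ≤ s := by positivity
  constructor <;> nlinarith [sq_nonneg (s - 2)]

theorem eq_le_psi_le_two_eq (q qd : EuclideanSpace ℝ (Fin 3))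
    (hq : ‖q‖ = 1) (hqd : ‖qd‖ = 1) (h : ⟪qd, q⟫ > -1) :
    ‖eVec q qd‖ ^ 2 ≤ Psi q qd ∧ Psi q qd ≤ 2 * ‖eVec q qd‖ ^ 2 := by
  have h_le_one : ⟪qd, q⟫ ≤ 1 := by simpa [hq, hqd] using real_inner_le_norm qd q
  rw [norm_eVec_sq hq hqd h, mul_div_cancel₀ _ two_ne_zero]
  exact two_sub_sqrt_two_mul_sqrt_one_add_mem_Icc h.le h_le_one
end

section
/- Let m, k₁, k₂ > 0, let σ₁ be a nondecreasing smooth linear saturation function with limits (a₁, b₁) and σ₂ a nondecreasing smooth linear saturation function with limits (a₂, b₂), with b₁ < a₂/2. Let ξ : [0,∞) → ℝ satisfy sup_{t>0} |ξ(t)| < min(a₂/2 − b₁, a₁), and let y₁, y₂ : [0,∞) → ℝ be differentiable solutions of ẏ₁ = y₂, m·ẏ₂ = −σ₂((k₁/k₂)y₂ + σ₁(k₁y₁ + k₂m·y₂)) + ξ(t). Then there exists t₁ > 0 such that |y₂(t)| < (k₂/k₁)(a₂/2) for all t > t₁, so that the argument of σ₂ satisfies |(k₁/k₂)y₂(t)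 + σ₁(k₁y₁(t) + k₂m·y₂(t))| < a₂ for all t > t₁ (σ₂ operates in its linear region after t₁). -/
/-- A smooth linear saturation function with limits (a, b): a C^∞ function σ : ℝ → ℝ with
s·σ(s) > 0 for s ≠ 0, σ(s) = s for |s| ≤ a, and |σ(s)| ≤ b everywhere. -/
def IsSmoothLinearSaturation (a b : ℝ) (σ : ℝ → ℝ) : Prop :=
  ContDiff ℝ (⊤ : ℕ∞) σ ∧ (∀ s : ℝ, s ≠ 0 → s * σ s > 0) ∧
    (∀ s : ℝ, |s| ≤ a → σ s = s) ∧ (∀ s : ℝ, |σ s| ≤ b)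

/-- After a finite time t₁, the velocity y₂ satisfies |y₂| < (k₂/k₁)(a₂/2), so that the
outer saturation σ₂ operates in its linear region. -/
theorem sigma2_enters_linear_region
    (m k₁ k₂ a₁ b₁ a₂ b₂ : ℝ) (hm : 0 < m) (hk₁ : 0 < k₁) (hk₂ : 0 < k₂)
    (ha₁ : 0 < a₁) (hab₁ : a₁ ≤ b₁) (ha₂ : 0 < a₂) (hab₂ : a₂ ≤ b₂)
    (hb₁a₂ : b₁ < a₂ / 2)
    (σ₁ σ₂ : ℝ → ℝ)
    (hσ₁ : IsSmoothLinearSaturation a₁ b₁ σ₁) (hσ₁mono : Monotone σ₁)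
    (hσ₂ : IsSmoothLinearSaturation a₂ b₂ σ₂) (hσ₂mono : Monotone σ₂)
    (ξ : ℝ → ℝ) (c : ℝ) (hc : c < min (a₂ / 2 - b₁) a₁)
    (hξ : ∀ t : ℝ, 0 < t → |ξ t| ≤ c)
    (y₁ y₂ y₂' : ℝ → ℝ)
    (hy₁ : ∀ t : ℝ, 0 ≤ t → HasDerivAt y₁ (y₂ t) t)
    (hy₂ : ∀ t : ℝ, 0 ≤ t → HasDerivAt y₂ (y₂' t) t)
    (hode : ∀ t : ℝ, 0 ≤ t →
      m * y₂' t = -σ₂ (k₁ / k₂ * y₂ t + σ₁ (k₁ * y₁ t + k₂ * m * y₂ t)) + ξ t) :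
    ∃ t₁ : ℝ, 0 < t₁ ∧ ∀ t : ℝ, t₁ < t →
      |y₂ t| < k₂ / k₁ * (a₂ / 2) ∧
      |k₁ / k₂ * y₂ t + σ₁ (k₁ * y₁ t + k₂ * m * y₂ t)| < a₂ := by
  obtain ⟨hσ₁s, hσ₁pos, hσ₁lin, hσ₁bdd⟩ := hσ₁
  obtain ⟨hσ₂s, hσ₂pos, hσ₂lin, hσ₂bdd⟩ := hσ₂
  set M : ℝ := k₂ / k₁ * (a₂ / 2) with hM
  have hk12 : 0 < k₁ / k₂ := div_pos hk₁ hk₂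
  have hMpos : 0 < M := by positivity
  have hkM : k₁ / k₂ * M = a₂ / 2 := by
    rw [hM]; field_simp
  have hc0 : 0 ≤ c := le_trans (abs_nonneg _) (hξ 1 one_pos)
  have hrc : c < a₂ / 2 - b₁ := lt_of_lt_of_le hc (min_le_left _ _)
  have hb₁0 : 0 < b₁ := lt_of_lt_of_le ha₁ hab₁
  set δ : ℝ := (a₂ / 2 - b₁ - c) / m with hδdef
  have hδ : 0 < δ := div_pos (by linarith) hm
  have hσ₂r : σ₂ (a₂ / 2 - b₁) = a₂ / 2 - b₁ := by
    apply hσ₂lin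
    rw [abs_of_pos (by linarith)]; linarith
  have hσ₂r' : σ₂ (-(a₂ / 2 - b₁)) = -(a₂ / 2 - b₁) := by
    apply hσ₂lin
    rw [abs_neg, abs_of_pos (by linarith)]; linarith
  -- key derivative bounds
  have key_up : ∀ t : ℝ, 0 < t → M ≤ y₂ t → y₂' t ≤ -δ := by
    intro t ht hMt
    have h1 : a₂ / 2 ≤ k₁ / k₂ * y₂ t := by
      rw [← hkM]; exact mul_le_mul_of_nonneg_left hMt hk12.le
    have h2 : -b₁ ≤ σ₁ (k₁ * y₁ t + k₂ * m * y₂ t) :=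
      neg_le_of_abs_le (hσ₁bdd _)
    have h3 : a₂ / 2 - b₁ ≤ k₁ / k₂ * y₂ t + σ₁ (k₁ * y₁ t + k₂ * m * y₂ t) := by linarith
    have h4 : a₂ / 2 - b₁ ≤ σ₂ (k₁ / k₂ * y₂ t + σ₁ (k₁ * y₁ t + k₂ * m * y₂ t)) :=
      hσ₂r ▸ hσ₂mono h3
    have h5 := hode t ht.le
    have h6 : ξ t ≤ c := le_trans (le_abs_self _) (hξ t ht)
    have h7 : m * y₂' t ≤ m * (-δ) := by
      have hmd : m * (-δ) = -(a₂ / 2 - b₁ - c) := by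
        rw [hδdef]; field_simp
      rw [hmd]; linarith
    exact le_of_mul_le_mul_left h7 hm
  have key_dn : ∀ t : ℝ, 0 < t → y₂ t ≤ -M → δ ≤ y₂' t := by
    intro t ht hMt
    have h1 : k₁ / k₂ * y₂ t ≤ -(a₂ / 2) := by
      have h := mul_le_mul_of_nonneg_left hMt hk12.le
      rw [mul_neg, hkM] at h; exact h
    have h2 : σ₁ (k₁ * y₁ t + k₂ * m * y₂ t) ≤ b₁ :=
      le_of_abs_le (hσ₁bdd _)
    have h3 : k₁ / k₂ * y₂ t + σ₁ (k₁ * y₁ t + k₂ * m * y₂ t) ≤ -(a₂ / 2 - b₁) := by linarith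
    have h4 : σ₂ (k₁ / k₂ * y₂ t + σ₁ (k₁ * y₁ t + k₂ * m * y₂ t)) ≤ -(a₂ / 2 - b₁) :=
      hσ₂r' ▸ hσ₂mono h3
    have h5 := hode t ht.le
    have h6 : -c ≤ ξ t := neg_le_of_abs_le (hξ t ht)
    have h7 : m * δ ≤ m * y₂' t := by
      have hmd : m * δ = a₂ / 2 - b₁ - c := by rw [hδdef]; field_simp
      rw [hmd]; linarith
    exact le_of_mul_le_mul_left h7 hm
  have hy₂cont : ∀ s : Set ℝ, s ⊆ Set.Ici 0 → ContinuousOn y₂ s := by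
    intro s hs x hx
    exact ((hy₂ x (hs hx)).continuousAt).continuousWithinAt
  -- mean-value decrease/increase lemmas
  have decr : ∀ T₀ T : ℝ, 0 < T₀ → T₀ ≤ T → (∀ s ∈ Set.Icc T₀ T, M ≤ y₂ s) →
      y₂ T ≤ y₂ T₀ - δ * (T - T₀) := by
    intro T₀ T hT₀ hTT hall
    have hsub : Set.Icc T₀ T ⊆ Set.Ici 0 := fun x hx => le_trans hT₀.le hx.1
    have hanti : AntitoneOn (fun t => y₂ t + δ * t) (Set.Icc T₀ T) := by
      apply antitoneOn_of_hasDerivWithinAt_nonpos (f' := fun x => y₂' x + δ)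
        (convex_Icc T₀ T)
        ((hy₂cont _ hsub).add (continuousOn_const.mul continuousOn_id))
      · intro x hx
        rw [interior_Icc] at hx
        have hd : HasDerivAt (fun t => y₂ t + δ * t) (y₂' x + δ) x := by
          have h := (hy₂ x (le_trans hT₀.le hx.1.le)).add ((hasDerivAt_id' x).const_mul δ); rwa [mul_one] at h
        exact hd.hasDerivWithinAt
      · intro x hx
        rw [interior_Icc] at hx
        have := key_up x (lt_trans hT₀ hx.1) (hall x ⟨hx.1.le, hx.2.le⟩)
        linarith
    have h := hanti ⟨le_refl T₀, hTT⟩ ⟨hTT, le_refl T⟩ hTT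
    simp only at h
    linarith
  have incr : ∀ T₀ T : ℝ, 0 < T₀ → T₀ ≤ T → (∀ s ∈ Set.Icc T₀ T, y₂ s ≤ -M) →
      y₂ T₀ + δ * (T - T₀) ≤ y₂ T := by
    intro T₀ T hT₀ hTT hall
    have hsub : Set.Icc T₀ T ⊆ Set.Ici 0 := fun x hx => le_trans hT₀.le hx.1
    have hmono : MonotoneOn (fun t => y₂ t - δ * t) (Set.Icc T₀ T) := by
      apply monotoneOn_of_hasDerivWithinAt_nonneg (f' := fun x => y₂' x - δ)
        (convex_Icc T₀ T)
        ((hy₂cont _ hsub).sub (continuousOn_const.mul continuousOn_id))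
      · intro x hx
        rw [interior_Icc] at hx
        have hd : HasDerivAt (fun t => y₂ t - δ * t) (y₂' x - δ) x := by
          have h := (hy₂ x (le_trans hT₀.le hx.1.le)).sub ((hasDerivAt_id' x).const_mul δ); rwa [mul_one] at h
        exact hd.hasDerivWithinAt
      · intro x hx
        rw [interior_Icc] at hx
        have := key_dn x (lt_trans hT₀ hx.1) (hall x ⟨hx.1.le, hx.2.le⟩)
        linarith
    have h := hmono ⟨le_refl T₀, hTT⟩ ⟨hTT, le_refl T⟩ hTT
    simp only at h
    linarith
  -- no crossing of zero is possible if |y₂| ≥ M always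
  -- Step A: reach the region
  have reach : ∃ t₀ : ℝ, 0 < t₀ ∧ |y₂ t₀| < M := by
    by_contra hcon
    push_neg at hcon
    have hzero : ∀ p q : ℝ, 0 < p → 0 < q → M ≤ y₂ p → y₂ q ≤ -M → False := by
      intro p q hp hq hyp hyq
      have hcont : ContinuousOn y₂ (Set.uIcc p q) := by
        apply hy₂cont
        intro x hx
        have := hx.1
        have hmin : 0 < min p q := lt_min hp hq
        exact le_trans hmin.le (by simpa [Set.uIcc] using hx.1)
      have h0 : (0 : ℝ) ∈ Set.uIcc (y₂ p) (y₂ q) := by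
        rw [Set.mem_uIcc]
        right
        constructor <;> linarith
      obtain ⟨s, hs, hys⟩ := intermediate_value_uIcc hcont h0
      have hs0 : 0 < s := by
        have := hs.1
        have hmin : 0 < min p q := lt_min hp hq
        exact lt_of_lt_of_le hmin (by simpa [Set.uIcc] using hs.1)
      have := hcon s hs0
      rw [hys] at this
      simp at this
      linarith
    rcases le_abs.mp (hcon 1 one_pos) with hup | hdn
    · -- y₂ 1 ≥ M
      have hall : ∀ t : ℝ, 1 ≤ t → M ≤ y₂ t := by
        intro t ht
        rcases le_or_gt M (y₂ t) with h' | h'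
        · exact h'
        · have hle : y₂ t ≤ -M := by
            rcases le_abs.mp (hcon t (by linarith)) with h'' | h''
            · linarith
            · linarith
          exact (hzero 1 t one_pos (by linarith) hup hle).elim
      set T : ℝ := 1 + (y₂ 1 - M + 1) / δ with hT
      have hnum : 0 ≤ (y₂ 1 - M + 1) / δ := by
        apply div_nonneg _ hδ.le
        have := hall 1 le_rfl
        linarith
      have hT1 : (1 : ℝ) ≤ T := by rw [hT]; linarith
      have hd := decr 1 T one_pos hT1 (fun s hs => hall s hs.1)
      have hTe : δ * (T - 1) = y₂ 1 - M + 1 := by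
        rw [hT]
        field_simp
        ring
      have := hall T hT1
      rw [hTe] at hd
      linarith
    · -- y₂ 1 ≤ -M
      have hup1 : M ≤ -y₂ 1 := hdn
      have hall : ∀ t : ℝ, 1 ≤ t → y₂ t ≤ -M := by
        intro t ht
        rcases le_or_gt (y₂ t) (-M) with h' | h'
        · exact h'
        · have hge : M ≤ y₂ t := by
            rcases le_abs.mp (hcon t (by linarith)) with h'' | h''
            · linarith
            · linarith
          exact (hzero t 1 (by linarith) one_pos hge (by linarith)).elim
      set T : ℝ := 1 + (-M - y₂ 1 + 1) / δ with hT
      have hnum : 0 ≤ (-M - y₂ 1 + 1) / δ := by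
        apply div_nonneg _ hδ.le
        have := hall 1 le_rfl
        linarith
      have hT1 : (1 : ℝ) ≤ T := by rw [hT]; linarith
      have hi := incr 1 T one_pos hT1 (fun s hs => hall s hs.1)
      have hTe : δ * (T - 1) = -M - y₂ 1 + 1 := by
        rw [hT]
        field_simp
        ring
      have := hall T hT1
      rw [hTe] at hi
      linarith
  -- Step B: invariance
  have stay : ∀ t₀ : ℝ, 0 < t₀ → |y₂ t₀| < M → ∀ t : ℝ, t₀ ≤ t → |y₂ t| < M := by
    intro t₀ ht₀ hlt t htt
    by_contra hge
    push_neg at hge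
    set S : Set ℝ := {s : ℝ | s ∈ Set.Icc t₀ t ∧ M ≤ |y₂ s|} with hS
    have hSne : S.Nonempty := ⟨t, ⟨htt, le_refl t⟩, hge⟩
    have hSbdd : BddBelow S := ⟨t₀, fun s hs => hs.1.1⟩
    have hScl : IsClosed S := by
      have heq : S = Set.Icc t₀ t ∩ (fun s => |y₂ s|) ⁻¹' Set.Ici M := by
        ext x; simp [hS, Set.mem_Ici]
      rw [heq]
      apply ContinuousOn.preimage_isClosed_of_isClosed
      · exact ((hy₂cont _ (fun x hx => le_trans ht₀.le hx.1)).abs)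
      · exact isClosed_Icc
      · exact isClosed_Ici
    set s₀ : ℝ := sInf S with hs₀def
    have hs₀S : s₀ ∈ S := hScl.csInf_mem hSne hSbdd
    have hs₀pos : 0 < s₀ := lt_of_lt_of_le ht₀ hs₀S.1.1
    have hne : t₀ < s₀ := by
      rcases lt_or_eq_of_le hs₀S.1.1 with h | h
      · exact h
      · exfalso; rw [← h] at hs₀S; exact absurd hs₀S.2 (not_le.mpr hlt)
    have hbelow : ∀ s : ℝ, t₀ ≤ s → s < s₀ → |y₂ s| < M := by
      intro s h1 h2
      by_contra hM'
      push_neg at hM'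
      have hsS : s ∈ S := ⟨⟨h1, le_trans h2.le hs₀S.1.2⟩, hM'⟩
      exact absurd (csInf_le hSbdd hsS) (not_le.mpr h2)
    have hslope := hasDerivAt_iff_tendsto_slope.mp (hy₂ s₀ hs₀pos.le)
    rcases le_abs.mp hs₀S.2 with hup | hdn
    · -- y₂ s₀ ≥ M, derivative negative: just to the left y₂ > M
      have hd := key_up s₀ hs₀pos hup
      have hev : ∀ᶠ s in nhdsWithin s₀ {s₀}ᶜ, slope y₂ s₀ s < 0 :=
        hslope.eventually_lt_const (by linarith : y₂' s₀ < 0)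
      have hev' : ∀ᶠ s in nhdsWithin s₀ (Set.Iio s₀), slope y₂ s₀ s < 0 :=
        hev.filter_mono (nhdsWithin_mono _ (fun x hx => ne_of_lt hx))
      have hmem : Set.Ioo t₀ s₀ ∈ nhdsWithin s₀ (Set.Iio s₀) :=
        Ioo_mem_nhdsLT_of_mem ⟨hne, le_refl _⟩
      obtain ⟨s, hs1, hs2⟩ :=
        (hev'.and (Filter.eventually_of_mem hmem (fun x hx => hx))).exists
      have hlt0 : s - s₀ < 0 := sub_neg.mpr hs2.2
      have hsl : (y₂ s - y₂ s₀) / (s - s₀) < 0 := by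
        rw [slope_def_field] at hs1
        simpa [div_eq_inv_mul] using hs1
      have hgt : y₂ s₀ < y₂ s := by
        by_contra hcon'
        push_neg at hcon'
        have : 0 ≤ (y₂ s - y₂ s₀) / (s - s₀) :=
          div_nonneg_of_nonpos (by linarith) hlt0.le
        linarith
      have habs : M ≤ |y₂ s| := le_trans (le_trans hup hgt.le) (le_abs_self _)
      exact absurd (hbelow s hs2.1.le hs2.2) (not_lt.mpr habs)
    · -- y₂ s₀ ≤ -M
      have hdn' : y₂ s₀ ≤ -M := by linarith
      have hd := key_dn s₀ hs₀pos hdn'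
      have hev : ∀ᶠ s in nhdsWithin s₀ {s₀}ᶜ, 0 < slope y₂ s₀ s :=
        hslope.eventually_const_lt (by linarith : (0:ℝ) < y₂' s₀)
      have hev' : ∀ᶠ s in nhdsWithin s₀ (Set.Iio s₀), 0 < slope y₂ s₀ s :=
        hev.filter_mono (nhdsWithin_mono _ (fun x hx => ne_of_lt hx))
      have hmem : Set.Ioo t₀ s₀ ∈ nhdsWithin s₀ (Set.Iio s₀) :=
        Ioo_mem_nhdsLT_of_mem ⟨hne, le_refl _⟩
      obtain ⟨s, hs1, hs2⟩ :=
        (hev'.and (Filter.eventually_of_mem hmem (fun x hx => hx))).exists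
      have hlt0 : s - s₀ < 0 := sub_neg.mpr hs2.2
      have hsl : 0 < (y₂ s - y₂ s₀) / (s - s₀) := by
        rw [slope_def_field] at hs1
        simpa [div_eq_inv_mul] using hs1
      have hgt : y₂ s < y₂ s₀ := by
        by_contra hcon'
        push_neg at hcon'
        have : (y₂ s - y₂ s₀) / (s - s₀) ≤ 0 :=
          div_nonpos_of_nonneg_of_nonpos (by linarith) hlt0.le
        linarith
      have habs : M ≤ |y₂ s| := by
        have : y₂ s ≤ -M := by linarith
        calc M ≤ -y₂ s := by linarith
        _ ≤ |y₂ s| := neg_le_abs _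
      exact absurd (hbelow s hs2.1.le hs2.2) (not_lt.mpr habs)
  -- assemble
  obtain ⟨t₀, ht₀, hlt⟩ := reach
  refine ⟨t₀, ht₀, fun t ht => ?_⟩
  have h1 : |y₂ t| < M := stay t₀ ht₀ hlt t ht.le
  refine ⟨h1, ?_⟩
  have h2 : |k₁ / k₂ * y₂ t| < a₂ / 2 := by
    rw [abs_mul, abs_of_pos hk12, ← hkM]
    exact mul_lt_mul_of_pos_left h1 hk12
  have h3 : |σ₁ (k₁ * y₁ t + k₂ * m * y₂ t)| ≤ b₁ := hσ₁bdd _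
  calc |k₁ / k₂ * y₂ t + σ₁ (k₁ * y₁ t + k₂ * m * y₂ t)|
      ≤ |k₁ / k₂ * y₂ t| + |σ₁ (k₁ * y₁ t + k₂ * m * y₂ t)| := abs_add_le _ _
    _ < a₂ / 2 + a₂ / 2 := by linarith
    _ = a₂ := by ring
end

section
/- (Lemma 3.) Let m, k₁, k₂ > 0, let σ₁ be a nondecreasing smooth linear saturation function with limits (a₁, b₁) and σ₂ a nondecreasing smooth linear saturation function with limits (a₂, b₂), with b₁ < a₂/2. Let ξ : [0,∞) → ℝ satisfy sup_{t>0} |ξ(t)| < min(a₂/2 − b₁, a₁), and let y₁, y₂ : [0,∞) → ℝ be differentiable solutions of ẏ₁ = y₂, m·ẏ₂ = −σ₂((k₁/k₂)y₂ + σ₁(k₁y₁ + k₂m·y₂)) + ξ(t). Then there exists a finite time t₂ > 0 such that for all t > t₂ both σ₁ and σ₂ operate in their linear regions: |k₁y₁(t) + k₂m·y₂(t)| < a₁ and |(k₁/k₂)y₂(t) + σ₁(k₁y₁(t) + k₂m·y₂(t))| < a₂. -/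
private lemma sat_lb {a b : ℝ} {σ : ℝ → ℝ} (hσ : IsSmoothLinearSaturation a b σ)
    (hmono : Monotone σ) {L s : ℝ} (h0 : 0 ≤ L) (hLa : L ≤ a) (hLs : L ≤ s) : L ≤ σ s := by
  rcases le_or_gt s a with h | h
  · rw [hσ.2.2.1 s (abs_le.2 ⟨by linarith, h⟩)]; exact hLs
  · have ha : σ a = a := hσ.2.2.1 a (abs_le.2 ⟨by linarith, le_rfl⟩)
    calc L ≤ a := hLa
    _ = σ a := ha.symm
    _ ≤ σ s := hmono h.le

private lemma sat_ub {a b : ℝ} {σ : ℝ → ℝ} (hσ : IsSmoothLinearSaturation a b σ)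
    (hmono : Monotone σ) {L s : ℝ} (h0 : 0 ≤ L) (hLa : L ≤ a) (hLs : s ≤ -L) : σ s ≤ -L := by
  rcases le_or_gt (-a) s with h | h
  · rw [hσ.2.2.1 s (abs_le.2 ⟨h, by linarith⟩)]; exact hLs
  · have ha : σ (-a) = -a := hσ.2.2.1 (-a) (by rw [abs_neg, abs_of_nonneg (by linarith)])
    calc σ s ≤ σ (-a) := hmono h.le
    _ = -a := ha
    _ ≤ -L := by linarith

/-- If `f' ≤ -r` whenever `f ≥ L` (for times `≥ T`), then eventually `f ≤ L` forever. -/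
private lemma decay (f f' : ℝ → ℝ) {T L r : ℝ} (hr : 0 < r)
    (hd : ∀ t, T ≤ t → HasDerivAt f (f' t) t)
    (hdec : ∀ t, T ≤ t → L ≤ f t → f' t ≤ -r) :
    ∃ T', T ≤ T' ∧ ∀ t, T' ≤ t → f t ≤ L := by
  have hcont : ∀ s t, T ≤ s → ContinuousOn f (Set.Icc s t) := fun s t hs x hx =>
    ((hd x (hs.trans hx.1)).continuousAt).continuousWithinAt
  have hinv : ∀ s t, T ≤ s → s ≤ t → f s ≤ L → f t ≤ L := by
    intro s t hs hst hfs
    have := image_le_of_deriv_right_lt_deriv_boundary (f := f) (f' := f') (a := s) (b := t)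
      (hcont s t hs)
      (fun x hx => (hd x (hs.trans hx.1)).hasDerivWithinAt)
      (B := fun _ => L) (B' := fun _ => 0) hfs (fun x => hasDerivAt_const x L)
      (fun x hx hfx => by
        show f' x < 0
        have := hdec x (hs.trans hx.1) hfx.ge
        linarith)
    exact this (Set.mem_Icc.2 ⟨hst, le_rfl⟩)
  rcases le_or_gt (f T) L with h | h
  · exact ⟨T, le_rfl, fun t ht => hinv T t le_rfl ht h⟩
  · set b := T + (f T - L) / (r / 2) with hb
    have hr2 : (0:ℝ) < r / 2 := by linarith
    have hTb : T < b := by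
      have : 0 < (f T - L) / (r/2) := div_pos (by linarith) hr2
      simp only [hb]; linarith
    have hcancel : r / 2 * (b - T) = f T - L := by
      simp only [hb, add_sub_cancel_left]
      rw [mul_comm, div_mul_cancel₀ _ hr2.ne']
    have hfb : f b ≤ L := by
      have hres := image_le_of_deriv_right_lt_deriv_boundary (f := f) (f' := f') (a := T) (b := b)
        (hcont T b le_rfl)
        (fun x hx => (hd x hx.1).hasDerivWithinAt)
        (B := fun t => f T - r/2 * (t - T)) (B' := fun _ => -(r/2)) (by simp)
        (fun x => by
          simpa using (((hasDerivAt_id x).sub_const T).const_mul (r/2)).const_sub (f T))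
        (fun x hx hfx => by
          have hBx : L ≤ f x := by
            rw [hfx]
            show L ≤ f T - r/2 * (x - T)
            have h1 : r/2 * (x - T) ≤ r/2 * (b - T) :=
              mul_le_mul_of_nonneg_left (by linarith [hx.2]) hr2.le
            linarith [hcancel]
          show f' x < -(r/2)
          have := hdec x hx.1 hBx
          linarith)
        (Set.mem_Icc.2 ⟨hTb.le, le_rfl⟩)
      have hres' : f b ≤ f T - r/2 * (b - T) := hres
      linarith [hcancel]
    exact ⟨b, hTb.le, fun t ht => hinv b t hTb.le ht hfb⟩

/-- Lemma 3: after a finite time t₂, both saturation functions σ₁ and σ₂ operate in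
their linear regions. -/
theorem saturations_enter_linear_region
    (m k₁ k₂ a₁ b₁ a₂ b₂ : ℝ) (hm : 0 < m) (hk₁ : 0 < k₁) (hk₂ : 0 < k₂)
    (ha₁ : 0 < a₁) (hab₁ : a₁ ≤ b₁) (ha₂ : 0 < a₂) (hab₂ : a₂ ≤ b₂)
    (hb₁a₂ : b₁ < a₂ / 2)
    (σ₁ σ₂ : ℝ → ℝ)
    (hσ₁ : IsSmoothLinearSaturation a₁ b₁ σ₁) (hσ₁mono : Monotone σ₁)
    (hσ₂ : IsSmoothLinearSaturation a₂ b₂ σ₂) (hσ₂mono : Monotone σ₂)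
    (ξ : ℝ → ℝ) (c : ℝ) (hc : c < min (a₂ / 2 - b₁) a₁)
    (hξ : ∀ t : ℝ, 0 < t → |ξ t| ≤ c)
    (y₁ y₂ y₂' : ℝ → ℝ)
    (hy₁ : ∀ t : ℝ, 0 ≤ t → HasDerivAt y₁ (y₂ t) t)
    (hy₂ : ∀ t : ℝ, 0 ≤ t → HasDerivAt y₂ (y₂' t) t)
    (hode : ∀ t : ℝ, 0 ≤ t →
      m * y₂' t = -σ₂ (k₁ / k₂ * y₂ t + σ₁ (k₁ * y₁ t + k₂ * m * y₂ t)) + ξ t) :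
    ∃ t₂ : ℝ, 0 < t₂ ∧ ∀ t : ℝ, t₂ < t →
      |k₁ * y₁ t + k₂ * m * y₂ t| < a₁ ∧
      |k₁ / k₂ * y₂ t + σ₁ (k₁ * y₁ t + k₂ * m * y₂ t)| < a₂ := by
  have hc0 : 0 ≤ c := le_trans (abs_nonneg _) (hξ 1 one_pos)
  have hca : c < a₁ := lt_of_lt_of_le hc (min_le_right _ _)
  have hcb : c < a₂/2 - b₁ := lt_of_lt_of_le hc (min_le_left _ _)
  have hb₁pos : 0 < b₁ := lt_of_lt_of_le ha₁ hab₁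
  set z₁ : ℝ → ℝ := fun t => k₁ * y₁ t + k₂ * m * y₂ t with hz₁def
  -- rewrite the ODE
  have hy₂'eq : ∀ t, 0 ≤ t →
      y₂' t = (ξ t - σ₂ (k₁/k₂ * y₂ t + σ₁ (z₁ t))) / m := by
    intro t ht
    have h := hode t ht
    rw [eq_div_iff hm.ne']
    simp only [hz₁def] at h ⊢
    linarith
  -- Phase A : velocity enters region |k₁/k₂ · y₂| ≤ a₂/2
  have hr₂ : 0 < k₁/k₂ * ((a₂/2 - b₁ - c)/m) :=
    mul_pos (div_pos hk₁ hk₂) (div_pos (by linarith) hm)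
  have key : ∀ x y : ℝ, x ≤ y → k₁/k₂ * (x/m) ≤ k₁/k₂ * (y/m) := fun x y h =>
    mul_le_mul_of_nonneg_left (div_le_div_of_nonneg_right h hm.le) (div_pos hk₁ hk₂).le
  obtain ⟨Tu, hTu1, hTu⟩ := decay (fun t => k₁/k₂ * y₂ t) (fun t => k₁/k₂ * y₂' t)
      (T := 1) (L := a₂/2) hr₂
      (fun t ht => ((hy₂ t (by linarith)).const_mul _))
      (by
        intro t ht hL
        have ht0 : (0:ℝ) ≤ t := by linarith
        have hσ₁bd := abs_le.1 (hσ₁.2.2.2 (z₁ t))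
        have hz₂lb : a₂/2 - b₁ ≤ k₁/k₂ * y₂ t + σ₁ (z₁ t) := by
          linarith [hσ₁bd.1]
        have hσ₂lb : a₂/2 - b₁ ≤ σ₂ (k₁/k₂ * y₂ t + σ₁ (z₁ t)) :=
          sat_lb hσ₂ hσ₂mono (by linarith) (by linarith) hz₂lb
        have hξt := (abs_le.1 (hξ t (by linarith))).2
        rw [hy₂'eq t ht0]
        have h1 : ξ t - σ₂ (k₁/k₂ * y₂ t + σ₁ (z₁ t)) ≤ -(a₂/2 - b₁ - c) := by linarith
        have h2 := key _ _ h1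
        have h3 : k₁/k₂ * (-(a₂/2 - b₁ - c)/m) = -(k₁/k₂ * ((a₂/2 - b₁ - c)/m)) := by ring
        linarith)
  obtain ⟨Tl, hTl1, hTl⟩ := decay (fun t => -(k₁/k₂ * y₂ t)) (fun t => -(k₁/k₂ * y₂' t))
      (T := 1) (L := a₂/2) hr₂
      (fun t ht => ((hy₂ t (by linarith)).const_mul _).neg)
      (by
        intro t ht hL
        have ht0 : (0:ℝ) ≤ t := by linarith
        have hσ₁bd := abs_le.1 (hσ₁.2.2.2 (z₁ t))
        have hz₂ub : k₁/k₂ * y₂ t + σ₁ (z₁ t) ≤ -(a₂/2 - b₁) := by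
          linarith [hσ₁bd.2]
        have hσ₂ub : σ₂ (k₁/k₂ * y₂ t + σ₁ (z₁ t)) ≤ -(a₂/2 - b₁) :=
          sat_ub hσ₂ hσ₂mono (by linarith) (by linarith) hz₂ub
        have hξt := (abs_le.1 (hξ t (by linarith))).1
        rw [hy₂'eq t ht0]
        have h1 : a₂/2 - b₁ - c ≤ ξ t - σ₂ (k₁/k₂ * y₂ t + σ₁ (z₁ t)) := by linarith
        have h2 := key _ _ h1
        linarith)
  set TA := max Tu Tl with hTAdef
  have hTA1 : (1:ℝ) ≤ TA := le_trans hTu1 (le_max_left _ _)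
  have habs₂ : ∀ t, TA ≤ t → |k₁/k₂ * y₂ t| ≤ a₂/2 := by
    intro t ht
    have h1 := hTu t (le_trans (le_max_left _ _) ht)
    have h2 := hTl t (le_trans (le_max_right _ _) ht)
    exact abs_le.2 ⟨by linarith, h1⟩
  have hz₂abs : ∀ t, TA ≤ t → |k₁/k₂ * y₂ t + σ₁ (z₁ t)| < a₂ := by
    intro t ht
    have h1 := habs₂ t ht
    have h2 := hσ₁.2.2.2 (z₁ t)
    calc |k₁/k₂ * y₂ t + σ₁ (z₁ t)| ≤ |k₁/k₂ * y₂ t| + |σ₁ (z₁ t)| := abs_add_le _ _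
    _ ≤ a₂/2 + b₁ := add_le_add h1 h2
    _ < a₂ := by linarith
  have hσ₂lin : ∀ t, TA ≤ t →
      σ₂ (k₁/k₂ * y₂ t + σ₁ (z₁ t)) = k₁/k₂ * y₂ t + σ₁ (z₁ t) := fun t ht =>
    hσ₂.2.2.1 _ (hz₂abs t ht).le
  -- derivative of z₁
  have hz₁d : ∀ t, (0:ℝ) ≤ t → HasDerivAt z₁ (k₁ * y₂ t + k₂ * m * y₂' t) t := fun t ht =>
    ((hy₁ t ht).const_mul k₁).add ((hy₂ t ht).const_mul (k₂ * m))
  have hz₁'eq : ∀ t, TA ≤ t →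
      k₁ * y₂ t + k₂ * m * y₂' t = k₂ * (ξ t - σ₁ (z₁ t)) := by
    intro t ht
    have ht0 : (0:ℝ) ≤ t := by linarith
    have h := hode t ht0
    change m * y₂' t = -σ₂ (k₁ / k₂ * y₂ t + σ₁ (z₁ t)) + ξ t at h
    rw [hσ₂lin t ht] at h
    have h3 : k₂ * (k₁ / k₂) = k₁ := by field_simp
    linear_combination k₂ * h - y₂ t * h3
  -- Phase B : z₁ enters region |z₁| ≤ (a₁+c)/2 < a₁
  set L₁ := (a₁ + c)/2 with hL₁def
  have hr₁ : 0 < k₂ * (L₁ - c) := mul_pos hk₂ (by simp only [hL₁def]; linarith)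
  obtain ⟨Tb1, hTb1ge, hTb1⟩ := decay z₁ (fun t => k₁ * y₂ t + k₂ * m * y₂' t)
      (T := TA) (L := L₁) hr₁
      (fun t ht => hz₁d t (by linarith))
      (by
        intro t ht hL
        have hσ₁lb : L₁ ≤ σ₁ (z₁ t) :=
          sat_lb hσ₁ hσ₁mono (by simp only [hL₁def]; linarith) (by simp only [hL₁def]; linarith) hL
        have hξt := (abs_le.1 (hξ t (by linarith))).2
        rw [hz₁'eq t ht]
        have h1 : ξ t - σ₁ (z₁ t) ≤ -(L₁ - c) := by linarith
        nlinarith [mul_le_mul_of_nonneg_left h1 hk₂.le])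
  obtain ⟨Tb2, hTb2ge, hTb2⟩ := decay (fun t => -(z₁ t)) (fun t => -(k₁ * y₂ t + k₂ * m * y₂' t))
      (T := TA) (L := L₁) hr₁
      (fun t ht => (hz₁d t (by linarith)).neg)
      (by
        intro t ht hL
        have hσ₁ub : σ₁ (z₁ t) ≤ -L₁ :=
          sat_ub hσ₁ hσ₁mono (by simp only [hL₁def]; linarith) (by simp only [hL₁def]; linarith)
            (by linarith)
        have hξt := (abs_le.1 (hξ t (by linarith))).1
        rw [hz₁'eq t ht]
        have h1 : L₁ - c ≤ ξ t - σ₁ (z₁ t) := by linarith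
        nlinarith [mul_le_mul_of_nonneg_left h1 hk₂.le])
  have hTb1pos : (0:ℝ) < Tb1 := lt_of_lt_of_le one_pos (hTA1.trans hTb1ge)
  refine ⟨max Tb1 Tb2, lt_of_lt_of_le hTb1pos (le_max_left _ _), ?_⟩
  intro t ht
  have ht1 : Tb1 ≤ t := le_of_lt (lt_of_le_of_lt (le_max_left _ _) ht)
  have ht2 : Tb2 ≤ t := le_of_lt (lt_of_le_of_lt (le_max_right _ _) ht)
  have hTAt : TA ≤ t := le_trans hTb1ge ht1
  constructor
  · have h1 := hTb1 t ht1
    have h2 := hTb2 t ht2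
    have : |z₁ t| ≤ L₁ := abs_le.2 ⟨by linarith, h1⟩
    calc |z₁ t| ≤ L₁ := this
    _ < a₁ := by simp only [hL₁def]; linarith
  · exact hz₂abs t hTAt
end

section
/- Let m > 0, k_x > 0, k_v > 0, θ₀ ∈ [0, π/2), and write s = sin θ₀. If the constant c satisfies 0 < c < min{ k_x·k_v·(1 − s)² · ( k_x·(1 − s) + k_v²·(1 + s)²/(4m) )⁻¹ , k_v·(1 − s) }, then the symmetric 2×2 matrix W₁ = [[ c·k_x·(1 − s)/m , −c·k_v·(1 + s)/(2m) ], [ −c·k_v·(1 + s)/(2m) , k_v·(1 − s) − c ]] is positive definite. -/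
/-!
A symmetric 2×2 matrix `[[a, b], [b, d]]` with `d > 0` and `b² < a d` is positive definite,
since `d` times its quadratic form is `(d x₁ + b x₀)² + (a d - b²) x₀²`. For `W₁`, the bound
`c < k_v (1 - s)` gives `d > 0` and `1 - s > 0`; the first bound, cleared of its positive
denominator, is equivalent to `a d - b² > 0`, because `a d - b²` is `c / m` times the difference of its two sides.
-/

open Matrix in
theorem Matrix.posDef_fin_two_of_pos_of_sq_lt {R : Type*} [CommRing R] [LinearOrder R]
    [IsStrictOrderedRing R] [StarRing R] [TrivialStar R] {a b d : R}
    (hd : 0 < d) (hb : b ^ 2 < a * d) : (!![a, b; b, d]).PosDef := by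
  refine .of_dotProduct_mulVec_pos ?_ fun x hx => ?_
  · ext i j
    fin_cases i <;> fin_cases j <;> simp
  have hquad : star x ⬝ᵥ (!![a, b; b, d] *ᵥ x) =
      a * x 0 ^ 2 + 2 * b * x 0 * x 1 + d * x 1 ^ 2 := by
    simp only [star_trivial, dotProduct, mulVec, Fin.sum_univ_two, cons_val', cons_val_zero,
      cons_val_one, of_apply, empty_val', cons_val_fin_one]
    ring
  rw [hquad]
  rcases eq_or_ne (x 0) 0 with h0 | h0
  · have h1 : x 1 ≠ 0 := fun h1 => hx (funext fun i => by fin_cases i <;> assumption)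
    simpa [h0] using mul_pos hd (sq_pos_of_ne_zero h1)
  · nlinarith [sq_nonneg (d * x 1 + b * x 0), mul_pos (sub_pos.mpr hb) (sq_pos_of_ne_zero h0)]

theorem W1_posDef_general (m kx kv c : ℝ)
    (hm : 0 < m) (hkx : 0 < kx) (hkv : 0 < kv)
    (s : ℝ)
    (hc : 0 < c)
    (hcbound : c < min
      (kx * kv * (1 - s) ^ 2 * (kx * (1 - s) + kv ^ 2 * (1 + s) ^ 2 / (4 * m))⁻¹)
      (kv * (1 - s))) :
    (!![c * kx * (1 - s) / m, -(c * kv * (1 + s) / (2 * m));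
        -(c * kv * (1 + s) / (2 * m)), kv * (1 - s) - c] : Matrix (Fin 2) (Fin 2) ℝ).PosDef := by
  obtain ⟨hc_det, hc_kv⟩ := lt_min_iff.mp hcbound
  have hs : 0 < 1 - s := pos_of_mul_pos_right (hc.trans hc_kv) hkv.le
  have hden : 0 < kx * (1 - s) + kv ^ 2 * (1 + s) ^ 2 / (4 * m) := by positivity
  rw [lt_mul_inv_iff₀ hden] at hc_det
  refine Matrix.posDef_fin_two_of_pos_of_sq_lt (sub_pos.mpr hc_kv) ?_
  have hdet : c * kx * (1 - s) / m * (kv * (1 - s) - c) - (-(c * kv * (1 + s) / (2 * m))) ^ 2 =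
      c / m * (kx * kv * (1 - s) ^ 2 - c * (kx * (1 - s) + kv ^ 2 * (1 + s) ^ 2 / (4 * m))) := by
    field_simp
    ring
  exact sub_pos.mp (hdet ▸ mul_pos (div_pos hc hm) (sub_pos.mpr hc_det))

/-- The matrix W₁ from the translational Lyapunov analysis is positive definite
under the stated bound on the cross-term coefficient c. -/
theorem W1_posDef (m kx kv θ₀ c : ℝ)
    (hm : 0 < m) (hkx : 0 < kx) (hkv : 0 < kv)
    (hθ₀ : 0 ≤ θ₀) (hθ₀' : θ₀ < Real.pi / 2)
    (s : ℝ) (hs : s = Real.sin θ₀)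
    (hc : 0 < c)
    (hcbound : c < min
      (kx * kv * (1 - s) ^ 2 * (kx * (1 - s) + kv ^ 2 * (1 + s) ^ 2 / (4 * m))⁻¹)
      (kv * (1 - s))) :
    (!![c * kx * (1 - s) / m, -(c * kv * (1 + s) / (2 * m));
        -(c * kv * (1 + s) / (2 * m)), kv * (1 - s) - c] : Matrix (Fin 2) (Fin 2) ℝ).PosDef :=
  W1_posDef_general m kx kv c hm hkx hkv s hc hcbound
end

section
/- Let m > 0, k_x > 0, α > 0, c ≥ 0, let e_x, e_v ∈ ℝ³ and e_Ω ∈ ℝ², and let q, q_d ∈ S² with ⟨q_d, q⟩ > −1. Define V = (1/2)k_x‖e_x‖₂² + (1/2)m‖e_v‖₂² + c⟨e_x, e_v⟩ + α·Ψ(q, q_d) + (1/2)‖e_Ω‖₂², and set z₁ = (‖e_x‖₂, ‖e_v‖₂) ∈ ℝ², z₂ = (‖e_q(q, q_d)‖₂, ‖e_Ω‖₂) ∈ ℝ². Then z₁ᵀM₁z₁ + z₂ᵀM₂z₂ ≤ V ≤ z₁ᵀM₃z₁ + z₂ᵀM₄z₂, where M₁ = (1/2)[[k_x, −c], [−c,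 m]], M₃ = (1/2)[[k_x, c], [c, m]], M₂ = (1/2)·diag(2α, 1), and M₄ = (1/2)·diag(4α, 1). -/
/-!
With `s = ⟪q_d, q⟫`, the vector triple product expansion gives `q × (q × q_d) = s • q - q_d` for
a unit `q`, hence `‖e_q‖² = (1 - s) / 2`. Writing `t = √2 · √(1 + s) ∈ [0, 2]`, we have `Ψ = 2 - t`
and `‖e_q‖² = (2 - t)(2 + t) / 4`, so `‖e_q‖² ≤ Ψ ≤ 2‖e_q‖²` reduces to `(2 - t)² ≥ 0` and
`t (2 - t) ≥ 0`. The cross term `c⟪e_x, e_v⟫` is bounded by `±c‖e_x‖‖e_v‖` (Cauchy–Schwarz).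
-/

open Matrix
open scoped RealInnerProductSpace

lemma cross_eq_crossProduct (a b : EuclideanSpace ℝ (Fin 3)) :
    cross a b = WithLp.toLp 2 (crossProduct (WithLp.ofLp a) (WithLp.ofLp b)) := by
  simp [cross, cross_apply]

lemma cross_cross_eq_inner_smul_sub_inner_smul_s17 (u v w : EuclideanSpace ℝ (Fin 3)) :
    cross u (cross v w) = ⟪u, w⟫ • v - ⟪v, u⟫ • w := by
  simp only [cross_eq_crossProduct, EuclideanSpace.inner_eq_star_dotProduct, star_trivial,
    cross_cross_eq_smul_sub_smul', dotProduct_comm (WithLp.ofLp u)]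
  rfl

lemma cross_cross_self_of_norm_eq_one {q p : EuclideanSpace ℝ (Fin 3)} (hq : ‖q‖ = 1) :
    cross q (cross q p) = ⟪p, q⟫ • q - p := by
  rw [cross_cross_eq_inner_smul_sub_inner_smul_s17, real_inner_self_eq_norm_sq, hq, one_pow, one_smul,
    real_inner_comm]

lemma sq_norm_eVec {q qd : EuclideanSpace ℝ (Fin 3)} (hq : ‖q‖ = 1) (hqd : ‖qd‖ = 1)
    (hang : -1 < ⟪qd, q⟫) : ‖eVec q qd‖ ^ 2 = (1 - ⟪qd, q⟫) / 2 := by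
  have hpos : 0 < 1 + ⟪qd, q⟫ := by linarith
  have hnorm : ‖⟪qd, q⟫ • q - qd‖ ^ 2 = (1 - ⟪qd, q⟫) * (1 + ⟪qd, q⟫) := by
    rw [norm_sub_sq_real, real_inner_smul_left, norm_smul, real_inner_comm, hq, hqd,
      Real.norm_eq_abs, mul_pow, sq_abs]
    ring
  rw [eVec, cross_cross_self_of_norm_eq_one hq, norm_smul, mul_pow, hnorm,
    Real.norm_eq_abs, sq_abs, div_pow, mul_pow, Real.sq_sqrt zero_le_two, Real.sq_sqrt hpos.le]
  field_simp

lemma two_sub_le_two_sub_sqrt_two_mul_sqrt_le {u : ℝ} (hu₀ : 0 ≤ u) (hu₂ : u ≤ 2) :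
    (2 - u) / 2 ≤ 2 - √2 * √u ∧ 2 - √2 * √u ≤ 2 - u := by
  have ht₀ : 0 ≤ √2 * √u := by positivity
  have ht_sq : (√2 * √u) ^ 2 = 2 * u := by
    rw [mul_pow, Real.sq_sqrt zero_le_two, Real.sq_sqrt hu₀]
  have ht₂ : √2 * √u ≤ 2 := by nlinarith
  constructor <;> nlinarith

lemma sq_norm_eVec_le_Psi_le_two_mul {q qd : EuclideanSpace ℝ (Fin 3)} (hq : ‖q‖ = 1)
    (hqd : ‖qd‖ = 1) (hang : -1 < ⟪qd, q⟫) :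
    ‖eVec q qd‖ ^ 2 ≤ Psi q qd ∧ Psi q qd ≤ 2 * ‖eVec q qd‖ ^ 2 := by
  have hle : ⟪qd, q⟫ ≤ 1 := by
    simpa [hq, hqd] using real_inner_le_norm qd q
  obtain ⟨h_lower, h_upper⟩ :=
    two_sub_le_two_sub_sqrt_two_mul_sqrt_le (u := 1 + ⟪qd, q⟫) (by linarith) (by linarith)
  rw [sq_norm_eVec hq hqd hang, Psi]
  constructor <;> linarith

lemma vec2_dotProduct_mulVec_vec2 {R : Type*} [CommRing R] (x y a b c d : R) :
    ![x, y] ⬝ᵥ !![a, b; c, d] *ᵥ ![x, y] = a * x ^ 2 + (b + c) * x * y + d * y ^ 2 := by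
  simp only [mulVec, dotProduct, Fin.sum_univ_two, of_apply, cons_val', cons_val_fin_one,
    cons_val_zero, cons_val_one]
  ring

theorem lyapunov_sandwich_general
    (m kx α c : ℝ) (hα : 0 < α) (hc : 0 ≤ c)
    (ex ev : EuclideanSpace ℝ (Fin 3)) (eΩ : EuclideanSpace ℝ (Fin 2))
    (q qd : EuclideanSpace ℝ (Fin 3))
    (hq : ‖q‖ = 1) (hqd : ‖qd‖ = 1) (hang : ⟪qd, q⟫ > -1)
    (V : ℝ)
    (hV : V = (1 / 2) * kx * ‖ex‖ ^ 2 + (1 / 2) * m * ‖ev‖ ^ 2 + c * ⟪ex, ev⟫ +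
      α * Psi q qd + (1 / 2) * ‖eΩ‖ ^ 2)
    (z₁ z₂ : Fin 2 → ℝ)
    (hz₁ : z₁ = ![‖ex‖, ‖ev‖]) (hz₂ : z₂ = ![‖eVec q qd‖, ‖eΩ‖])
    (M₁ M₂ M₃ M₄ : Matrix (Fin 2) (Fin 2) ℝ)
    (hM₁ : M₁ = (1 / 2 : ℝ) • !![kx, -c; -c, m])
    (hM₃ : M₃ = (1 / 2 : ℝ) • !![kx, c; c, m])
    (hM₂ : M₂ = (1 / 2 : ℝ) • Matrix.diagonal ![2 * α, 1])
    (hM₄ : M₄ = (1 / 2 : ℝ) • Matrix.diagonal ![4 * α, 1]) :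
    z₁ ⬝ᵥ M₁.mulVec z₁ + z₂ ⬝ᵥ M₂.mulVec z₂ ≤ V ∧
    V ≤ z₁ ⬝ᵥ M₃.mulVec z₁ + z₂ ⬝ᵥ M₄.mulVec z₂ := by
  subst hV hz₁ hz₂ hM₁ hM₂ hM₃ hM₄
  obtain ⟨hΨ_lower, hΨ_upper⟩ := sq_norm_eVec_le_Psi_le_two_mul hq hqd hang
  obtain ⟨hcs_lower, hcs_upper⟩ := abs_le.mp (abs_real_inner_le_norm ex ev)
  simp only [smul_mulVec, dotProduct_smul, diagonal_vec2, vec2_dotProduct_mulVec_vec2, smul_eq_mul]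
  constructor
  · linarith [mul_le_mul_of_nonneg_left hcs_lower hc, mul_le_mul_of_nonneg_left hΨ_lower hα.le]
  · linarith [mul_le_mul_of_nonneg_left hcs_upper hc, mul_le_mul_of_nonneg_left hΨ_upper hα.le]

/-- The total Lyapunov function V is sandwiched between the quadratic forms
z₁ᵀM₁z₁ + z₂ᵀM₂z₂ and z₁ᵀM₃z₁ + z₂ᵀM₄z₂. -/
theorem lyapunov_sandwich
    (m kx α c : ℝ) (hm : 0 < m) (hkx : 0 < kx) (hα : 0 < α) (hc : 0 ≤ c)
    (ex ev : EuclideanSpace ℝ (Fin 3)) (eΩ : EuclideanSpace ℝ (Fin 2))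
    (q qd : EuclideanSpace ℝ (Fin 3))
    (hq : ‖q‖ = 1) (hqd : ‖qd‖ = 1) (hang : ⟪qd, q⟫ > -1)
    (V : ℝ)
    (hV : V = (1 / 2) * kx * ‖ex‖ ^ 2 + (1 / 2) * m * ‖ev‖ ^ 2 + c * ⟪ex, ev⟫ +
      α * Psi q qd + (1 / 2) * ‖eΩ‖ ^ 2)
    (z₁ z₂ : Fin 2 → ℝ)
    (hz₁ : z₁ = ![‖ex‖, ‖ev‖]) (hz₂ : z₂ = ![‖eVec q qd‖, ‖eΩ‖])
    (M₁ M₂ M₃ M₄ : Matrix (Fin 2) (Fin 2) ℝ)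
    (hM₁ : M₁ = (1 / 2 : ℝ) • !![kx, -c; -c, m])
    (hM₃ : M₃ = (1 / 2 : ℝ) • !![kx, c; c, m])
    (hM₂ : M₂ = (1 / 2 : ℝ) • Matrix.diagonal ![2 * α, 1])
    (hM₄ : M₄ = (1 / 2 : ℝ) • Matrix.diagonal ![4 * α, 1]) :
    z₁ ⬝ᵥ M₁.mulVec z₁ + z₂ ⬝ᵥ M₂.mulVec z₂ ≤ V ∧
    V ≤ z₁ ⬝ᵥ M₃.mulVec z₁ + z₂ ⬝ᵥ M₄.mulVec z₂ :=
  lyapunov_sandwich_general m kx α c hα hc ex ev eΩ q qd hq hqd hang V hV z₁ z₂ hz₁ hz₂ M₁ M₂ M₃ M₄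
    hM₁ hM₃ hM₂ hM₄
end
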